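/- Let n ≥ 1, let A be an n×n real matrix, let γ be an invertible n×n real matrix, and let ρ ≥ 0 be such that I + uA is invertible for every u in [0, ρ]. Set v(ρ) := det(I + ρA). Then v(ρ) · ∫₀^ρ ( γ·(I + uA)² )⁻¹ du = ( Σ_{k=1}^{n} ρ^k T_{k−1}(A) ) · γ⁻¹. -/

import Mathlib

open Polynomial MeasureTheory

/-- `σ_m(A)`: the coefficient of `t^m` in the polynomial `det (I + t A)`, i.e. the `m`-th
elementary symmetric function of the eigenvalues of `A`. -/
noncomputable def sigmaCoeff {n : ℕ} (A : Matrix (Fin n) (Fin n) ℝ) (m : ℕ) : ℝ :=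
  ((1 + (Polynomial.X : Polynomial ℝ) • A.map Polynomial.C).det).coeff m

/-- The `k`-th Newton transformation `T_k(A) = Σ_{j=0}^{k} (−1)^j σ_{k−j}(A) A^j`. -/
noncomputable def newtonT {n : ℕ} (A : Matrix (Fin n) (Fin n) ℝ) (k : ℕ) :
    Matrix (Fin n) (Fin n) ℝ :=
  ∑ j ∈ Finset.range (k + 1), ((-1 : ℝ) ^ j * sigmaCoeff A (k - j)) • A ^ j

/-!
Differentiating `u ↦ u (1 + uA)⁻¹` gives `(1 + uA)⁻²`, so the integral is `ρ (1 + ρA)⁻¹ γ⁻¹`.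
The recursion `T_{k+1} = σ_{k+1} I - A T_k` makes `(Σ_{m<n} ρᵐ Tₘ) (1 + ρA)` telescope to
`det (1 + ρA) I - ρⁿ Tₙ`, and `Tₙ(A) = 0` is Cayley–Hamilton for `-A`, since the `σ`'s are the
coefficients of its reversed characteristic polynomial. So `Σ_{m<n} ρᵐ Tₘ` is the adjugate
`det (1 + ρA) (1 + ρA)⁻¹`, and multiplying the integral by the determinant gives the sum.
-/

open Finset
open scoped Ring

section Newton

variable {n : ℕ} (A : Matrix (Fin n) (Fin n) ℝ)

lemma det_one_add_X_smul_eq_charpolyRev_neg :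
    (1 + (X : ℝ[X]) • A.map C).det = (-A).charpolyRev := by
  rw [Matrix.charpolyRev, Matrix.map_neg _ (map_neg C), smul_neg, sub_neg_eq_add]

lemma sigmaCoeff_eq_coeff_charpoly_neg {m : ℕ} (hm : m ≤ n) :
    sigmaCoeff A m = (-A).charpoly.coeff (n - m) := by
  rw [sigmaCoeff, det_one_add_X_smul_eq_charpolyRev_neg, ← Matrix.reverse_charpoly,
    coeff_reverse, Matrix.charpoly_natDegree_eq_dim, Fintype.card_fin, revAt_le hm]

lemma eval_det_one_add_X_smul (t : ℝ) :
    ((1 + (X : ℝ[X]) • A.map C).det).eval t = (1 + t • A).det := by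
  rw [← coe_evalRingHom, RingHom.map_det, map_add, map_one]
  congr
  ext i j
  simp only [RingHom.mapMatrix_apply, Matrix.map_apply, Matrix.smul_apply, coe_evalRingHom,
    smul_eq_mul, eval_mul, eval_X, eval_C]

lemma det_one_add_smul_eq_sum_sigmaCoeff (t : ℝ) :
    (1 + t • A).det = ∑ m ∈ range (n + 1), sigmaCoeff A m * t ^ m := by
  have hdeg : ((1 + (X : ℝ[X]) • A.map C).det).natDegree < n + 1 := by
    rw [det_one_add_X_smul_eq_charpolyRev_neg, ← Matrix.reverse_charpoly]
    refine (reverse_natDegree_le _).trans_lt ?_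
    simp [Matrix.charpoly_natDegree_eq_dim]
  rw [← eval_det_one_add_X_smul, eval_eq_sum_range' hdeg]
  rfl

lemma newtonT_dim_eq_zero : newtonT A n = 0 := by
  have hdeg : (-A).charpoly.natDegree < n + 1 := by
    simp [Matrix.charpoly_natDegree_eq_dim]
  rw [← Matrix.aeval_self_charpoly (-A), aeval_eq_sum_range' hdeg, newtonT]
  refine sum_congr rfl fun j hj => ?_
  rw [sigmaCoeff_eq_coeff_charpoly_neg A (Nat.sub_le n j),
    Nat.sub_sub_self (mem_range_succ_iff.mp hj), ← neg_one_smul ℝ A, _root_.smul_pow, smul_smul,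
    neg_one_smul, mul_comm]

lemma newtonT_zero : newtonT A 0 = sigmaCoeff A 0 • 1 := by
  simp [newtonT]

lemma newtonT_succ (k : ℕ) :
    newtonT A (k + 1) = sigmaCoeff A (k + 1) • 1 - A * newtonT A k := by
  rw [newtonT, sum_range_succ', newtonT, mul_sum, sub_eq_neg_add, ← sum_neg_distrib]
  congr 1
  · refine sum_congr rfl fun j _ => ?_
    rw [Nat.add_sub_add_right, Matrix.mul_smul, ← pow_succ', ← neg_smul, pow_succ]
    ring_nf
  · simp

lemma commute_newtonT (k : ℕ) : Commute A (newtonT A k) :=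
  Commute.sum_right _ _ _ fun j _ => ((Commute.refl A).pow_right j).smul_right _

lemma sum_pow_smul_newtonT_mul_one_add_smul_add_pow_smul (t : ℝ) (N : ℕ) :
    (∑ m ∈ range N, t ^ m • newtonT A m) * (1 + t • A) + t ^ N • newtonT A N
      = (∑ m ∈ range (N + 1), sigmaCoeff A m * t ^ m) • 1 := by
  induction N with
  | zero => simp [newtonT_zero]
  | succ N ih =>
    have hstep : (t ^ N • newtonT A N) * (1 + t • A) + t ^ (N + 1) • newtonT A (N + 1)
        = t ^ N • newtonT A N + (sigmaCoeff A (N + 1) * t ^ (N + 1)) • 1 := by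
      rw [newtonT_succ, smul_mul_assoc, mul_add, mul_one, mul_smul_comm,
        ← (commute_newtonT A N).eq, smul_add, smul_smul, ← pow_succ, smul_sub, smul_smul,
        mul_comm (t ^ (N + 1))]
      abel
    rw [sum_range_succ, sum_range_succ (fun m => sigmaCoeff A m * t ^ m) (N + 1), add_smul,
      ← ih, add_mul, add_assoc, hstep, add_assoc]

lemma sum_pow_smul_newtonT_mul_one_add_smul (t : ℝ) :
    (∑ m ∈ range n, t ^ m • newtonT A m) * (1 + t • A) = (1 + t • A).det • 1 := by
  simpa [newtonT_dim_eq_zero, det_one_add_smul_eq_sum_sigmaCoeff] using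
    sum_pow_smul_newtonT_mul_one_add_smul_add_pow_smul A t n

lemma sum_pow_smul_newtonT_eq_det_smul_inverse {t : ℝ} (h : IsUnit (1 + t • A)) :
    ∑ m ∈ range n, t ^ m • newtonT A m = (1 + t • A).det • (1 + t • A)⁻¹ʳ := by
  rw [(Ring.eq_mul_inverse_iff_mul_eq _ _ _ h).mpr (sum_pow_smul_newtonT_mul_one_add_smul A t),
    smul_one_mul]

lemma sum_Icc_pow_smul_newtonT_pred (t : ℝ) :
    ∑ k ∈ Icc 1 n, t ^ k • newtonT A (k - 1) = t • ∑ m ∈ range n, t ^ m • newtonT A m := by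
  rw [← Ico_add_one_right_eq_Icc, sum_Ico_eq_sum_range, smul_sum]
  refine sum_congr rfl fun m _ => ?_
  rw [add_comm 1 m, add_tsub_cancel_right, smul_smul, pow_succ']

end Newton

section InverseOneAddSmul

variable {𝕜 R : Type*} [NontriviallyNormedField 𝕜] [NormedRing R] [HasSummableGeomSeries R]
  [NormedAlgebra 𝕜 R] (a : R)

lemma hasDerivAt_inverse_one_add_smul {t : 𝕜} (h : IsUnit (1 + t • a)) :
    HasDerivAt (fun s : 𝕜 => (1 + s • a)⁻¹ʳ) (-((1 + t • a)⁻¹ʳ * a * (1 + t • a)⁻¹ʳ)) t := by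
  have hlin : HasDerivAt (fun s : 𝕜 => 1 + s • a) a t := by
    simpa only [one_smul] using ((hasDerivAt_id' t).smul_const a).const_add 1
  have := (hasFDerivAt_ringInverse (𝕜 := 𝕜) h.unit).comp_hasDerivAt t hlin
  rwa [neg_apply, ContinuousLinearMap.mulLeftRight_apply,
    ← Ring.inverse_of_isUnit h] at this

lemma hasDerivAt_smul_inverse_one_add_smul {t : 𝕜} (h : IsUnit (1 + t • a)) :
    HasDerivAt (fun s : 𝕜 => s • (1 + s • a)⁻¹ʳ) ((1 + t • a)⁻¹ʳ ^ 2) t := by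
  set N := (1 + t • a)⁻¹ʳ
  have hN : N * (1 + t • a) * N = N := by rw [Ring.inverse_mul_cancel _ h, one_mul]
  have hderiv : t • -(N * a * N) + (1 : 𝕜) • N = N ^ 2 :=
    calc t • -(N * a * N) + (1 : 𝕜) • N = N * (1 + t • a) * N - t • (N * a * N) := by
          rw [hN, one_smul, smul_neg]; abel
      _ = N ^ 2 := by
          rw [mul_add, mul_one, add_mul, mul_smul_comm, smul_mul_assoc, sq, add_sub_cancel_right]
  exact hderiv ▸ (hasDerivAt_id' t).smul (hasDerivAt_inverse_one_add_smul a h)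

end InverseOneAddSmul

open scoped Matrix.Norms.Operator

lemma Matrix.of_intervalIntegral_apply_eq_sub_of_hasDerivAt {m n : Type*} [Fintype m] [Fintype n]
    {f f' : ℝ → Matrix m n ℝ} {a b : ℝ} (hderiv : ∀ x ∈ Set.uIcc a b, HasDerivAt f (f' x) x)
    (hcont : ContinuousOn f' (Set.uIcc a b)) :
    Matrix.of (fun i j => ∫ x in a..b, f' x i j) = f b - f a := by
  classical
  ext i j
  let entry : Matrix m n ℝ →L[ℝ] ℝ :=
    LinearMap.toContinuousLinearMap (Matrix.entryLinearMap ℝ ℝ i j)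
  exact intervalIntegral.integral_eq_sub_of_hasDerivAt
    (fun x hx => entry.hasFDerivAt.comp_hasDerivAt x (hderiv x hx))
    (entry.continuous.comp_continuousOn hcont).intervalIntegrable

theorem det_smul_integral_inv_eq_newton_sum_general (n : ℕ)
    (A γ : Matrix (Fin n) (Fin n) ℝ)
    (ρ : ℝ) (hρ : 0 ≤ ρ)
    (hu : ∀ u ∈ Set.Icc (0 : ℝ) ρ, IsUnit (1 + u • A)) :
    (1 + ρ • A).det •
        (Matrix.of fun i j : Fin n => ∫ u in (0 : ℝ)..ρ, (((γ * (1 + u • A) ^ 2)⁻¹ : Matrix (Fin n) (Fin n) ℝ) i j))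
      = (∑ k ∈ Finset.Icc 1 n, ρ ^ k • newtonT A (k - 1)) * γ⁻¹ := by
  rw [← Set.uIcc_of_le hρ] at hu
  have hintegrand (u : ℝ) : (γ * (1 + u • A) ^ 2)⁻¹ = (1 + u • A)⁻¹ʳ ^ 2 * γ⁻¹ := by
    rw [Matrix.mul_inv_rev, Matrix.nonsing_inv_eq_ringInverse, Ring.inverse_pow]
  have hintegral : (Matrix.of fun i j : Fin n => ∫ u in (0 : ℝ)..ρ, ((1 + u • A)⁻¹ʳ ^ 2 * γ⁻¹) i j)
      = (ρ • (1 + ρ • A)⁻¹ʳ) * γ⁻¹ := by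
    rw [Matrix.of_intervalIntegral_apply_eq_sub_of_hasDerivAt
      (f := fun u => (u • (1 + u • A)⁻¹ʳ) * γ⁻¹)
      (fun u hu' => (hasDerivAt_smul_inverse_one_add_smul A (hu u hu')).mul_const γ⁻¹)]
    · simp only [zero_smul, zero_mul, sub_zero]
    · refine (ContinuousOn.pow (fun u hu' => ?_) 2).mul continuousOn_const
      exact (hasDerivAt_inverse_one_add_smul A (hu u hu')).continuousAt.continuousWithinAt
  simp_rw [hintegrand, hintegral]
  rw [sum_Icc_pow_smul_newtonT_pred,
    sum_pow_smul_newtonT_eq_det_smul_inverse A (hu ρ Set.right_mem_uIcc), smul_comm,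
    smul_mul_assoc, smul_mul_assoc, smul_mul_assoc]

/-- With `v(ρ) = det (I + ρA)`, `γ` invertible and `I + uA` invertible
for `u ∈ [0, ρ]`, `ρ ≥ 0`, one has
`v(ρ) · ∫₀^ρ (γ (I + uA)²)⁻¹ du = (Σ_{k=1}^{n} ρ^k T_{k−1}(A)) γ⁻¹`, the integral
being taken entrywise. -/
theorem det_smul_integral_inv_eq_newton_sum (n : ℕ) (hn : 1 ≤ n)
    (A γ : Matrix (Fin n) (Fin n) ℝ) (hγ : IsUnit γ)
    (ρ : ℝ) (hρ : 0 ≤ ρ)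
    (hu : ∀ u ∈ Set.Icc (0 : ℝ) ρ, IsUnit (1 + u • A)) :
    (1 + ρ • A).det •
        (Matrix.of fun i j : Fin n => ∫ u in (0 : ℝ)..ρ, (((γ * (1 + u • A) ^ 2)⁻¹ : Matrix (Fin n) (Fin n) ℝ) i j))
      = (∑ k ∈ Finset.Icc 1 n, ρ ^ k • newtonT A (k - 1)) * γ⁻¹ :=
  det_smul_integral_inv_eq_newton_sum_general n A γ ρ hρ hu
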